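/- arXiv:2504.21549 — 5 statements merged into one kernel-verified Lean document; each statement's English description precedes it below -/
import Mathlib

section
/- Let M ≥ 2 and w_1, …, w_M > 0 with Σ_m w_m ≥ (M−1)·max_m w_m. Define φ_m = 1 − (M−1)w_m / Σ_{m'} w_{m'}. Then φ minimizes G(φ) = Σ_m w_m² / (1−φ_m) over the set {φ : 0 ≤ φ_m < 1, Σ_m φ_m = 1}, and the minimum value is (Σ_m w_m)²/(M−1). -/
open Finset

/-- for w_m > 0 with Σ w ≥ (M−1)·max w, the allocation
φ_m = 1 − (M−1) w_m / Σ w minimizes G(φ) = Σ w_m²/(1−φ_m) over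
{φ : 0 ≤ φ_m < 1, Σ φ_m = 1}, with minimum value (Σ w)²/(M−1). -/
theorem stmt3 (M : ℕ) (hM : 2 ≤ M) (w : Fin M → ℝ) (hw : ∀ m, 0 < w m)
    (hfeas : ((M : ℝ) - 1) *
      Finset.univ.sup' (Finset.univ_nonempty_iff.mpr (Fin.pos_iff_nonempty.mp (by omega))) w
      ≤ ∑ m, w m)
    (φ : Fin M → ℝ) (hφ : ∀ m, φ m = 1 - ((M : ℝ) - 1) * w m / ∑ m', w m') :
    ((∀ m, 0 ≤ φ m ∧ φ m < 1) ∧ ∑ m, φ m = 1) ∧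
    (∑ m, w m ^ 2 / (1 - φ m) = (∑ m, w m) ^ 2 / ((M : ℝ) - 1)) ∧
    (∀ ψ : Fin M → ℝ, (∀ m, 0 ≤ ψ m ∧ ψ m < 1) → ∑ m, ψ m = 1 →
      (∑ m, w m) ^ 2 / ((M : ℝ) - 1) ≤ ∑ m, w m ^ 2 / (1 - ψ m)) := by
  have hM1 : (0:ℝ) < (M : ℝ) - 1 := by
    have : (2:ℝ) ≤ (M:ℝ) := by exact_mod_cast hM
    linarith
  have hS : (0:ℝ) < ∑ m', w m' := Finset.sum_pos (fun m _ => hw m) ⟨⟨0, by omega⟩, mem_univ _⟩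
  have hne := (Finset.univ_nonempty_iff.mpr (Fin.pos_iff_nonempty.mp (show 0 < M by omega)))
  refine ⟨⟨fun m => ?_, ?_⟩, ?_, ?_⟩
  · rw [hφ m]
    constructor
    · have hle : w m ≤ Finset.univ.sup' hne w := Finset.le_sup' w (mem_univ m)
      have : ((M:ℝ) - 1) * w m ≤ ∑ m', w m' := by
        calc ((M:ℝ) - 1) * w m ≤ ((M:ℝ) - 1) * Finset.univ.sup' hne w := by
              exact mul_le_mul_of_nonneg_left hle hM1.le
          _ ≤ _ := hfeas
      have := div_le_one_of_le₀ this hS.le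
      linarith
    · have : 0 < ((M:ℝ) - 1) * w m / ∑ m', w m' :=
        div_pos (mul_pos hM1 (hw m)) hS
      linarith
  · have : ∑ m, φ m = ∑ m : Fin M, (1 - ((M : ℝ) - 1) * w m / ∑ m', w m') := by
      exact Finset.sum_congr rfl fun m _ => hφ m
    rw [this, Finset.sum_sub_distrib]
    rw [Finset.sum_const, Finset.card_univ, Fintype.card_fin]
    have : ∑ m : Fin M, ((M : ℝ) - 1) * w m / ∑ m', w m'
        = ((M:ℝ) - 1) * (∑ m, w m) / ∑ m', w m' := by
      rw [← Finset.sum_div, ← Finset.mul_sum]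
    rw [this, mul_div_assoc, div_self hS.ne', mul_one]
    simp
  · have h1 : ∀ m, 1 - φ m = ((M:ℝ) - 1) * w m / ∑ m', w m' := by
      intro m; rw [hφ m]; ring
    have : ∑ m, w m ^ 2 / (1 - φ m) = ∑ m, w m * (∑ m', w m') / ((M:ℝ) - 1) := by
      refine Finset.sum_congr rfl fun m _ => ?_
      rw [h1 m, div_eq_iff (div_pos (mul_pos hM1 (hw m)) hS).ne']
      field_simp
    rw [this, ← Finset.sum_div, ← Finset.sum_mul, pow_two]
  · intro ψ hψ hψsum
    have hg : ∀ m ∈ Finset.univ, (0:ℝ) < 1 - ψ m := fun m _ => by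
      have := (hψ m).2; linarith
    have hgsum : ∑ m : Fin M, (1 - ψ m) = (M:ℝ) - 1 := by
      rw [Finset.sum_sub_distrib, hψsum, Finset.sum_const, Finset.card_univ,
        Fintype.card_fin, nsmul_eq_mul, mul_one]
    have := Finset.sq_sum_div_le_sum_sq_div Finset.univ w hg
    rwa [hgsum] at this
end

section
/- Suppose a deterministic sequence of probe selections is defined as follows: given a fixed target distribution φ* in the M-simplex, at each step t ≥ 1 select m_t ∈ argmax_m (φ*_m − S_{m,t−1}/max(t−1,1)), where S_{m,t} counts selections of m among the first t steps (S_{m,0} = 0). Then for all t ≥ 1, max_m |S_{m,t}/t − φ*_m| ≤ M/t. -/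
open Finset

/-- tracking lemma for a fixed chased target φ*. If at each step t ≥ 1 the
selection m_t maximizes φ*_m − S_{m,t−1}/max(t−1,1), then for all t ≥ 1 and all m,
|S_{m,t}/t − φ*_m| ≤ M/t. -/
theorem stmt4 (M : ℕ) (hM : 1 ≤ M) (φs : Fin M → ℝ)
    (hpos : ∀ m, 0 ≤ φs m) (hsum : ∑ m, φs m = 1)
    (sel : ℕ → Fin M) (S : Fin M → ℕ → ℕ)
    (hS : ∀ m t, S m t = ((Finset.Icc 1 t).filter (fun s => sel s = m)).card)
    (hsel : ∀ t, 1 ≤ t → ∀ j,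
      φs j - (S j (t - 1) : ℝ) / ((max (t - 1) 1 : ℕ) : ℝ) ≤
      φs (sel t) - (S (sel t) (t - 1) : ℝ) / ((max (t - 1) 1 : ℕ) : ℝ)) :
    ∀ t, 1 ≤ t → ∀ m, |(S m t : ℝ) / (t : ℝ) - φs m| ≤ (M : ℝ) / (t : ℝ) := by
  have hzero : ∀ m, S m 0 = 0 := by intro m; simp [hS]
  have hstep : ∀ m t, S m (t + 1) = S m t + if sel (t + 1) = m then 1 else 0 := by
    intro m t
    rw [hS, hS]
    have hins : Finset.Icc 1 (t + 1) = insert (t + 1) (Finset.Icc 1 t) := by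
      ext x; simp [Finset.mem_Icc, Finset.mem_insert]; omega
    rw [hins, Finset.filter_insert]
    by_cases h : sel (t + 1) = m
    · simp only [h, if_true]
      rw [Finset.card_insert_of_notMem (by simp)]
    · simp [h]
  have hsumS : ∀ t, ∑ m, S m t = t := by
    intro t
    induction t with
    | zero => simp [hzero]
    | succ t ih =>
      simp only [hstep, Finset.sum_add_distrib, ih]
      rw [Finset.sum_ite_eq Finset.univ (sel (t + 1)) (fun _ => 1)]
      simp
  have hub : ∀ t m, (S m t : ℝ) ≤ t * φs m + 1 := by
    intro t
    induction t with
    | zero => intro m; simp [hzero]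
    | succ t ih =>
      intro m
      rw [hstep]
      by_cases hm : sel (t + 1) = m
      · have hkey : (S (sel (t + 1)) t : ℝ) ≤ t * φs (sel (t + 1)) := by
          rcases Nat.eq_zero_or_pos t with h0 | hpos'
          · subst h0; simp [hzero]
          · obtain ⟨j, hj⟩ : ∃ j, (S j t : ℝ) ≤ t * φs j := by
              by_contra hcon
              push_neg at hcon
              have h1 : ((t : ℕ) : ℝ) = ∑ j, (S j t : ℝ) := by
                rw [← Nat.cast_sum, hsumS t]
              have h2 : ∑ j, (t : ℝ) * φs j = t := by
                rw [← Finset.mul_sum, hsum, mul_one]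
              have h3 : ∑ j, (t : ℝ) * φs j < ∑ j, (S j t : ℝ) :=
                Finset.sum_lt_sum_of_nonempty ⟨⟨0, by omega⟩, Finset.mem_univ _⟩
                  (fun j _ => hcon j)
              rw [h2, ← h1] at h3
              exact lt_irrefl _ h3
            have hs := hsel (t + 1) (by omega) j
            simp only [Nat.add_sub_cancel] at hs
            have hmax : (max t 1 : ℕ) = t := by omega
            rw [hmax] at hs
            have ht : (0 : ℝ) < t := by exact_mod_cast hpos'
            have h1 : 0 ≤ φs j - (S j t : ℝ) / t := by
              rw [sub_nonneg, div_le_iff₀ ht]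
              linarith [hj]
            have h2 : 0 ≤ φs (sel (t + 1)) - (S (sel (t + 1)) t : ℝ) / t := le_trans h1 hs
            rw [sub_nonneg, div_le_iff₀ ht] at h2
            linarith
        subst hm
        simp only [if_pos rfl]
        push_cast
        have := hpos (sel (t + 1))
        linarith
      · simp only [if_neg hm, add_zero]
        have := hpos m
        have := ih m
        push_cast
        linarith
  have hlb : ∀ (t : ℕ) (m : Fin M), (t : ℝ) * φs m - ((M : ℝ) - 1) ≤ (S m t : ℝ) := by
    intro t m
    have h1 : (t : ℝ) = ∑ j, (S j t : ℝ) := by rw [← Nat.cast_sum, hsumS t]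
    have h2 : ∑ j ∈ Finset.univ.erase m, (S j t : ℝ) ≤
        ∑ j ∈ Finset.univ.erase m, ((t : ℝ) * φs j + 1) :=
      Finset.sum_le_sum (fun j _ => hub t j)
    have h3 : ∑ j, (S j t : ℝ) = (S m t : ℝ) + ∑ j ∈ Finset.univ.erase m, (S j t : ℝ) :=
      (Finset.add_sum_erase _ _ (Finset.mem_univ m)).symm
    have h4 : ∑ j ∈ Finset.univ.erase m, ((t : ℝ) * φs j + 1)
        = (t : ℝ) * (1 - φs m) + (M - 1) := by
      rw [Finset.sum_add_distrib, ← Finset.mul_sum]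
      have h5 : ∑ j ∈ Finset.univ.erase m, φs j = 1 - φs m := by
        have := Finset.add_sum_erase Finset.univ φs (Finset.mem_univ m)
        rw [hsum] at this
        linarith
      have h6 : (Finset.univ.erase m).card = M - 1 := by
        rw [Finset.card_erase_of_mem (Finset.mem_univ m)]
        simp
      rw [h5, Finset.sum_const, h6, nsmul_eq_mul]
      have hc : ((M - 1 : ℕ) : ℝ) = (M : ℝ) - 1 := by
        push_cast [Nat.cast_sub hM]
        ring
      rw [hc]
      ring
    nlinarith [h2, h3, h4, h1]
  intro t ht m
  have htpos : (0 : ℝ) < t := by exact_mod_cast ht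
  have h1 : (S m t : ℝ) ≤ t * φs m + 1 := hub t m
  have h2 : (t : ℝ) * φs m - ((M : ℝ) - 1) ≤ (S m t : ℝ) := hlb t m
  have hM1 : (1 : ℝ) ≤ M := by exact_mod_cast hM
  have key : |(S m t : ℝ) - t * φs m| ≤ M := by
    rw [abs_le]; constructor <;> nlinarith
  have heq : (S m t : ℝ) / t - φs m = ((S m t : ℝ) - t * φs m) / t := by
    field_simp
  rw [heq, abs_div, abs_of_pos htpos]
  gcongr
end

section
/- Suppose at each step t ≥ 1 the algorithm chases a time-varying target φ̂_t ∈ ℝ^M lying in the probability simplex, selecting m_t ∈ argmax_m (φ̂_{m,t} − S_{m,t−1}/max(t−1,1)), and suppose there is a fixed φ* in the simplex and ε ≥ 0 with ‖φ̂_t − φ*‖_∞ ≤ ε for all t. Then for all t ≥ 1, max_m (S_{m,t}/t − φ*_m) ≤ 2ε + M/t. -/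
open Finset

/-!
Write `S_{m,t}` for the number of times `m` is selected up to step `t` and `d = max (t-1) 1`.
Since `∑ φ̂_t = 1` and `∑_m S_{m,t-1} = t - 1 ≤ d`, the deficits `φ̂_{m,t} - S_{m,t-1}/d` have
nonnegative sum, so the maximal one, which is the selected one, is nonnegative: a coordinate is
only selected while `S_{m,t-1} ≤ d φ̂_{m,t} ≤ t (φ*_m + ε)`. Hence `S_{m,t}` never exceeds
`t (φ*_m + ε) + 1`, which gives `S_{m,t}/t - φ*_m ≤ ε + 1/t`.
-/

def selCount {ι : Type*} [DecidableEq ι] (sel : ℕ → ι) (m : ι) (t : ℕ) : ℕ :=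
  #{s ∈ Icc 1 t | sel s = m}

section selCount

variable {ι : Type*} [DecidableEq ι] (sel : ℕ → ι)

@[simp]
theorem selCount_zero (m : ι) : selCount sel m 0 = 0 := by
  simp [selCount]

theorem selCount_succ (m : ι) (t : ℕ) :
    selCount sel m (t + 1) = selCount sel m t + if sel (t + 1) = m then 1 else 0 := by
  rw [selCount, selCount, ← insert_Icc_right_eq_Icc_add_one (by omega), filter_insert]
  split_ifs <;> simp

theorem sum_selCount [Fintype ι] (t : ℕ) : ∑ m, selCount sel m t = t := by
  simp only [selCount]
  rw [← card_eq_sum_card_fiberwise (fun _ _ => mem_univ _), Nat.card_Icc, Nat.add_sub_cancel]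

theorem selCount_le_mul_add_one {m : ι} {b : ℝ} (hb : 0 ≤ b)
    (h : ∀ t, sel (t + 1) = m → (selCount sel m t : ℝ) ≤ (t + 1) * b) (t : ℕ) :
    (selCount sel m t : ℝ) ≤ t * b + 1 := by
  induction t with
  | zero => simp
  | succ t ih =>
    rw [selCount_succ]
    split_ifs with hm
    · push_cast
      linarith [h t hm]
    · push_cast
      nlinarith

end selCount

theorem nonneg_of_forall_le_of_sum_nonneg {ι : Type*} [Fintype ι] {f : ι → ℝ} {i : ι}
    (hi : ∀ j, f j ≤ f i) (hsum : 0 ≤ ∑ j, f j) : 0 ≤ f i := by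
  obtain ⟨j, -, hj⟩ := exists_le_of_sum_le (univ_nonempty_iff.mpr ⟨i⟩)
    (by simpa using hsum : ∑ _j : ι, (0 : ℝ) ≤ ∑ j, f j)
  exact hj.trans (hi j)

theorem le_mul_of_isMax_deficit {ι : Type*} [Fintype ι] {p : ι → ℝ} (hp : ∑ j, p j = 1)
    {n : ι → ℕ} {d : ℝ} (hd : 0 < d) (hnd : ∑ j, (n j : ℝ) ≤ d) {i : ι}
    (hi : ∀ j, p j - n j / d ≤ p i - n i / d) : (n i : ℝ) ≤ d * p i := by
  have hsum : 0 ≤ ∑ j, (p j - n j / d) := by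
    rw [sum_sub_distrib, hp, ← sum_div, sub_nonneg]
    exact (div_le_one hd).mpr hnd
  have hi_nonneg := nonneg_of_forall_le_of_sum_nonneg hi hsum
  rwa [sub_nonneg, div_le_iff₀' hd] at hi_nonneg

theorem selCount_le_of_greedy {ι : Type*} [Fintype ι] [DecidableEq ι] {sel : ℕ → ι}
    {p : ι → ℝ} (hp : ∑ j, p j = 1) {t : ℕ}
    (hsel : ∀ j, p j - selCount sel j t / (max t 1 : ℕ) ≤
      p (sel (t + 1)) - selCount sel (sel (t + 1)) t / (max t 1 : ℕ)) :
    (selCount sel (sel (t + 1)) t : ℝ) ≤ (max t 1 : ℕ) * p (sel (t + 1)) := by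
  refine le_mul_of_isMax_deficit hp (by positivity) ?_ hsel
  exact_mod_cast (sum_selCount sel t).trans_le (le_max_left t 1)

theorem stmt5_general (M : ℕ) (ε : ℝ) (hε : 0 ≤ ε)
    (φs : Fin M → ℝ) (hpos : ∀ m, 0 ≤ φs m)
    (φhat : ℕ → Fin M → ℝ)
    (hhat : ∀ t, (∀ m, 0 ≤ φhat t m) ∧ ∑ m, φhat t m = 1)
    (hband : ∀ t m, |φhat t m - φs m| ≤ ε)
    (sel : ℕ → Fin M) (S : Fin M → ℕ → ℕ)
    (hS : ∀ m t, S m t = ((Finset.Icc 1 t).filter (fun s => sel s = m)).card)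
    (hsel : ∀ t, 1 ≤ t → ∀ j,
      φhat t j - (S j (t - 1) : ℝ) / ((max (t - 1) 1 : ℕ) : ℝ) ≤
      φhat t (sel t) - (S (sel t) (t - 1) : ℝ) / ((max (t - 1) 1 : ℕ) : ℝ)) :
    ∀ t, 1 ≤ t → ∀ m, (S m t : ℝ) / (t : ℝ) - φs m ≤ 2 * ε + (M : ℝ) / (t : ℝ) := by
  obtain rfl : S = selCount sel := funext₂ hS
  have hselected : ∀ m t, sel (t + 1) = m →
      (selCount sel m t : ℝ) ≤ (t + 1) * (φs m + ε) := by
    rintro m t rfl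
    calc (selCount sel (sel (t + 1)) t : ℝ)
        ≤ (max t 1 : ℕ) * φhat (t + 1) (sel (t + 1)) :=
          selCount_le_of_greedy (hhat (t + 1)).2 (by simpa using hsel (t + 1) le_add_self)
      _ ≤ (t + 1) * (φs (sel (t + 1)) + ε) := by
          gcongr
          · exact (hhat (t + 1)).1 _
          · exact_mod_cast max_le (Nat.le_succ t) le_add_self
          · linarith [(abs_le.mp (hband (t + 1) (sel (t + 1)))).2]
  intro t ht m
  have htpos : (0 : ℝ) < t := by exact_mod_cast ht
  have hM : (1 : ℝ) ≤ M := by exact_mod_cast m.pos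
  have hcount := selCount_le_mul_add_one sel (add_nonneg (hpos m) hε) (hselected m) t
  calc (selCount sel m t : ℝ) / t - φs m ≤ ε + 1 / t := by
        rw [sub_le_iff_le_add, div_le_iff₀ htpos]
        field_simp
        linarith
    _ ≤ 2 * ε + M / t := by gcongr; linarith

/-- tracking lemma for a time-varying chased target φ̂_t within sup-distance ε
of a fixed φ* in the simplex: for all t ≥ 1 and all m, S_{m,t}/t − φ*_m ≤ 2ε + M/t. -/
theorem stmt5 (M : ℕ) (hM : 1 ≤ M) (ε : ℝ) (hε : 0 ≤ ε)
    (φs : Fin M → ℝ) (hpos : ∀ m, 0 ≤ φs m) (hsum : ∑ m, φs m = 1)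
    (φhat : ℕ → Fin M → ℝ)
    (hhat : ∀ t, (∀ m, 0 ≤ φhat t m) ∧ ∑ m, φhat t m = 1)
    (hband : ∀ t m, |φhat t m - φs m| ≤ ε)
    (sel : ℕ → Fin M) (S : Fin M → ℕ → ℕ)
    (hS : ∀ m t, S m t = ((Finset.Icc 1 t).filter (fun s => sel s = m)).card)
    (hsel : ∀ t, 1 ≤ t → ∀ j,
      φhat t j - (S j (t - 1) : ℝ) / ((max (t - 1) 1 : ℕ) : ℝ) ≤
      φhat t (sel t) - (S (sel t) (t - 1) : ℝ) / ((max (t - 1) 1 : ℕ) : ℝ)) :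
    ∀ t, 1 ≤ t → ∀ m, (S m t : ℝ) / (t : ℝ) - φs m ≤ 2 * ε + (M : ℝ) / (t : ℝ) :=
  stmt5_general M ε hε φs hpos φhat hhat hband sel S hS hsel
end

section
/- Let Q be an M×M invertible 0-1 matrix in which every row has exactly two 1 entries. Then every entry of Q⁻¹ lies in the set {0, ±1/2, ±1}. -/
/-!
Let `Q x = e_j` and let `e_p + e_q` be row `j` of `Q`. Every other row `e_a + e_b` gives
`x a + x b = 0`, so `x a = ± x b`. Hence, for `x v ≠ 0`, the vector `z` obtained from `x` by
killing every entry other than `± x v` still satisfies `(Q z) r = 0` for `r ≠ j`, i.e.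
`Q z = c e_j = Q (c x)`. Injectivity gives `z = c x`, and evaluating at `v` gives `c = 1`: all
nonzero entries of `x` are `± x v`. Row `j` now reads `x p + x q = 1` with `x p, x q ∈ {0, ± x v}`,
which forces `x v ∈ {± 1/2, ± 1}`.
-/

open Finset Matrix

namespace Matrix

variable {K m n : Type*} [Field K] [Fintype n] [DecidableEq n]

/-- The unsigned edge-vertex incidence matrix of a multigraph, a loop at `a` being the row
`2 e a`. -/
def IsUnsignedIncidence (Q : Matrix m n K) : Prop :=
  ∀ r, ∃ a b, Q r = Pi.single a 1 + Pi.single b 1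

theorem exists_eq_single_add_single [DecidableEq K] {g : n → K}
    (h01 : ∀ u, g u = 0 ∨ g u = 1) (htwo : #{u | g u = 1} = 2) :
    ∃ a b, g = Pi.single a 1 + Pi.single b 1 := by
  obtain ⟨a, b, hab, hsupp⟩ := card_eq_two.mp htwo
  refine ⟨a, b, funext fun u => ?_⟩
  have hu := Finset.ext_iff.mp hsupp u
  simp only [mem_filter, mem_univ, true_and, mem_insert, mem_singleton] at hu
  rcases eq_or_ne u a with rfl | hua
  · simp [hu.mpr (.inl rfl), hab]
  rcases eq_or_ne u b with rfl | hub
  · simp [hu.mpr (.inr rfl), hua]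
  simp only [Pi.add_apply, Pi.single_eq_of_ne hua, Pi.single_eq_of_ne hub, add_zero]
  exact (h01 u).resolve_right fun h => by simp_all

theorem mulVec_apply_of_row_eq {Q : Matrix m n K} {r : m} {a b : n}
    (hr : Q r = Pi.single a 1 + Pi.single b 1) (z : n → K) :
    (Q *ᵥ z) r = z a + z b := by
  change Q r ⬝ᵥ z = _
  rw [hr, add_dotProduct, single_dotProduct, single_dotProduct, one_mul, one_mul]

namespace IsUnsignedIncidence

variable [DecidableEq m] {Q : Matrix m n K} {j : m} {x : n → K}

theorem eq_zero_or_eq_or_eq_neg_of_mulVec_eq_single (hQ : Q.IsUnsignedIncidence)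
    (hinj : Function.Injective Q.mulVec) (hx : Q *ᵥ x = Pi.single j 1) {v : n} (hv : x v ≠ 0)
    (w : n) : x w = 0 ∨ x w = x v ∨ x w = -x v := by
  classical
  set P : n → Prop := fun u => x u = x v ∨ x u = -x v
  set z : n → K := fun u => if P u then x u else 0
  have hP_of_eq_neg : ∀ {a b}, x b = -x a → (P b ↔ P a) := by
    intro a b h
    simp only [P, h, neg_eq_iff_eq_neg, neg_neg]
    tauto
  have hz : Q *ᵥ z = Pi.single j ((Q *ᵥ z) j) := by
    ext r
    rcases eq_or_ne r j with rfl | hrj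
    · simp
    obtain ⟨a, b, hr⟩ := hQ r
    have hab : x a + x b = 0 := by
      rw [← mulVec_apply_of_row_eq hr, hx, Pi.single_eq_of_ne hrj]
    rw [Pi.single_eq_of_ne hrj, mulVec_apply_of_row_eq hr]
    have hba := hP_of_eq_neg (eq_neg_of_add_eq_zero_right hab)
    by_cases hPa : P a
    · simp [z, hPa, hba.mpr hPa, hab]
    · simp [z, hPa, hba]
  set c := (Q *ᵥ z) j
  have hzx : z = c • x :=
    hinj (by rw [mulVec_smul, hx, ← Pi.single_smul, smul_eq_mul, mul_one, hz])
  have hc : c = 1 := by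
    have := congrFun hzx v
    simp only [z, P, true_or, if_true, Pi.smul_apply, smul_eq_mul] at this
    exact (mul_eq_right₀ hv).mp this.symm
  have hzw := congrFun hzx w
  simp only [z, hc, one_smul] at hzw
  by_cases hPw : P w
  · exact .inr hPw
  · simp only [hPw, if_false] at hzw
    exact .inl hzw.symm

theorem mem_of_mulVec_eq_single (hQ : Q.IsUnsignedIncidence)
    (hinj : Function.Injective Q.mulVec) (hx : Q *ᵥ x = Pi.single j 1) (v : n) :
    x v ∈ ({0, 1/2, -(1/2), 1, -1} : Set K) := by
  by_cases hv : x v = 0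
  · simp [hv]
  obtain ⟨p, q, hj⟩ := hQ j
  have hpq : x p + x q = 1 := by
    rw [← mulVec_apply_of_row_eq hj, hx, Pi.single_eq_same]
  have hp := hQ.eq_zero_or_eq_or_eq_neg_of_mulVec_eq_single hinj hx hv p
  have hq := hQ.eq_zero_or_eq_or_eq_neg_of_mulVec_eq_single hinj hx hv q
  simp only [Set.mem_insert_iff, Set.mem_singleton_iff]
  rcases hp with hp | hp | hp <;> rcases hq with hq | hq | hq <;> rw [hp, hq] at hpq <;> grind

end IsUnsignedIncidence

end Matrix

/-- if Q is an invertible 0-1 matrix in which every row has exactly two 1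
entries, then every entry of Q⁻¹ lies in {0, ±1/2, ±1}. -/
theorem stmt8 (M : ℕ) (Q : Matrix (Fin M) (Fin M) ℚ)
    (h01 : ∀ i j, Q i j = 0 ∨ Q i j = 1)
    (hdet : IsUnit Q.det)
    (hrow : ∀ i, (Finset.univ.filter (fun j => Q i j = 1)).card = 2) :
    ∀ i j, Q⁻¹ i j ∈ ({0, 1/2, -(1/2), 1, -1} : Set ℚ) := by
  intro i j
  have hQ : Q.IsUnsignedIncidence := fun r => exists_eq_single_add_single (h01 r) (hrow r)
  have hinj : Function.Injective Q.mulVec :=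
    mulVec_injective_iff_isUnit.mpr ((isUnit_iff_isUnit_det Q).mpr hdet)
  have hcol : Q *ᵥ Q⁻¹.col j = Pi.single j 1 := by
    rw [← mulVec_single_one, mulVec_mulVec, mul_nonsing_inv Q hdet, one_mulVec]
  exact hQ.mem_of_mulVec_eq_single hinj hcol i
end

section
/- Fix w : (0,1) → ℝ, w(x) = √(x(1−x)). The map μ ↦ φ*(μ) defined piecewise by Algorithm 2 of the paper (iteratively remove from the candidate set the index maximizing w(μ_ℓ) while Σ_{ℓ∈S} w(μ_ℓ) < (|S|−1)·max_{ℓ'∈S} w(μ_{ℓ'}), then output φ*_ℓ = (Σ_{ℓ'∈S} w(μ_{ℓ'}) − (|S|−1)w(μ_ℓ))/Σ_{ℓ'∈S} w(μ_{ℓ'}) for ℓ ∈ S and φ*_ℓ = 0 otherwise) is continuous at every μ ∈ (0,1)^L: changing the strict inequality in the elimination condition to a non-strict one yields the same output vector. -/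
open Finset
open scoped Classical

/-- Iterative elimination of Algorithm 2: while the candidate set S satisfies
Σ_{ℓ∈S} w ℓ < (|S|−1)·max_{ℓ∈S} w ℓ (strict version; ≤ for the non-strict version),
remove from S (a canonical choice of) the index maximizing w. -/
noncomputable def elimSet {L : ℕ} (w : Fin L → ℝ) (strict : Bool)
    (S : Finset (Fin L)) : Finset (Fin L) :=
  if h : S.Nonempty then
    if (if strict then ∑ ℓ ∈ S, w ℓ < ((S.card : ℝ) - 1) * S.sup' h w
        else ∑ ℓ ∈ S, w ℓ ≤ ((S.card : ℝ) - 1) * S.sup' h w) then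
      elimSet w strict
        (S.erase ((S.filter (fun ℓ => w ℓ = S.sup' h w)).min'
          (by
            obtain ⟨ℓ, hℓ, heq⟩ := Finset.exists_mem_eq_sup' h w
            exact ⟨ℓ, Finset.mem_filter.mpr ⟨hℓ, heq.symm⟩⟩)))
    else S
  else S
termination_by S.card
decreasing_by
  exact Finset.card_erase_lt_of_mem (Finset.mem_of_mem_filter _ (Finset.min'_mem _ _))

/-- The allocation produced from a final candidate set S:
φ_ℓ = (Σ_{ℓ'∈S} w ℓ' − (|S|−1)·w ℓ)/Σ_{ℓ'∈S} w ℓ' for ℓ ∈ S, and 0 otherwise. -/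
noncomputable def alloc {L : ℕ} (w : Fin L → ℝ) (S : Finset (Fin L)) : Fin L → ℝ :=
  fun ℓ => if ℓ ∈ S then
    (∑ ℓ' ∈ S, w ℓ' - ((S.card : ℝ) - 1) * w ℓ) / ∑ ℓ' ∈ S, w ℓ'
  else 0

/-- The A-optimal allocation map of Algorithm 2 with w(x) = √(x(1−x)). -/
noncomputable def phiStar {L : ℕ} (strict : Bool) (μ : Fin L → ℝ) : Fin L → ℝ :=
  alloc (fun ℓ => Real.sqrt (μ ℓ * (1 - μ ℓ)))
    (elimSet (fun ℓ => Real.sqrt (μ ℓ * (1 - μ ℓ))) strict Finset.univ)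

/-!
After elimination, the surviving set `T` is balanced (`(|T| - 1) w ℓ ≤ Σ_T w` on `T`) while every
removed index satisfies `Σ_T w ≤ (|T| - 1) w ℓ`. So, with `λ = (|T| - 1) / Σ_T w`, the
output is the water-filling allocation `φ_ℓ = max 0 (1 - λ w_ℓ)` with `Σ_ℓ φ_ℓ = 1`. The map
`t ↦ Σ_ℓ max 0 (1 - t w_ℓ)` is strictly decreasing while positive, so `λ` is its unique root of
level `1`. Hence `λ` does not depend on whether the elimination test is strict, and it varies
continuously with `μ`, because the map does.
-/

open Filter Topology

theorem le_of_ite_lt_le {a b : ℝ} {p : Bool} (h : if p then a < b else a ≤ b) : a ≤ b := by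
  cases p
  exacts [h, le_of_lt h]

theorem le_of_not_ite_lt_le {a b : ℝ} {p : Bool} (h : ¬if p then a < b else a ≤ b) : b ≤ a := by
  cases p
  exacts [le_of_lt (not_le.1 h), not_lt.1 h]

section Balanced

variable {ι : Type*}

def IsBalanced (w : ι → ℝ) (T : Finset ι) : Prop :=
  ∀ ℓ ∈ T, ((#T : ℝ) - 1) * w ℓ ≤ ∑ ℓ' ∈ T, w ℓ'

theorem erase_nonempty_of_sum_le [DecidableEq ι] {w : ι → ℝ} {S : Finset ι} {m : ι}
    (hw : ∀ ℓ ∈ S, 0 < w ℓ) (hm : m ∈ S) (hsum : ∑ ℓ ∈ S, w ℓ ≤ ((#S : ℝ) - 1) * w m) :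
    (S.erase m).Nonempty := by
  have hpos : 0 < ∑ ℓ ∈ S, w ℓ := sum_pos hw ⟨m, hm⟩
  have hcard : (1 : ℝ) < #S := by nlinarith [hw m hm]
  have hcard' : 1 < #S := by exact_mod_cast hcard
  exact card_pos.1 (by rw [card_erase_of_mem hm]; omega)

end Balanced

section Elimination

variable {L : ℕ} {w : Fin L → ℝ} {strict : Bool}

variable (w strict) in
theorem elimSet_cases (S : Finset (Fin L)) :
    (elimSet w strict S = S ∧ IsBalanced w S) ∨
    ∃ m ∈ S, (∀ ℓ ∈ S, w ℓ ≤ w m) ∧ ∑ ℓ ∈ S, w ℓ ≤ ((#S : ℝ) - 1) * w m ∧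
      elimSet w strict S = elimSet w strict (S.erase m) := by
  rcases S.eq_empty_or_nonempty with rfl | hne
  · simp [elimSet, IsBalanced]
  by_cases hcond : if strict then ∑ ℓ ∈ S, w ℓ < ((#S : ℝ) - 1) * S.sup' hne w
      else ∑ ℓ ∈ S, w ℓ ≤ ((#S : ℝ) - 1) * S.sup' hne w
  · rw [elimSet, dif_pos hne, if_pos hcond]
    generalize_proofs hm
    obtain ⟨hmS, hmw⟩ := mem_filter.1 (min'_mem _ hm)
    refine .inr ⟨_, hmS, fun ℓ hℓ => ?_, ?_, rfl⟩
    · rw [hmw]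
      exact le_sup' w hℓ
    · rw [hmw]
      exact le_of_ite_lt_le hcond
  · rw [elimSet, dif_pos hne, if_neg hcond]
    refine .inl ⟨rfl, fun ℓ hℓ => ?_⟩
    have hcard : (1 : ℝ) ≤ #S := by exact_mod_cast hne.card_pos
    nlinarith [le_sup' w hℓ, le_of_not_ite_lt_le hcond]

theorem elimSet_subset (S : Finset (Fin L)) : elimSet w strict S ⊆ S := by
  induction S using Finset.strongInduction with
  | H S ih =>
    rcases elimSet_cases w strict S with ⟨hS, -⟩ | ⟨m, hm, -, -, hS⟩
    · exact hS.subset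
    · rw [hS]
      exact (ih _ (erase_ssubset hm)).trans (erase_subset m S)

theorem isBalanced_elimSet (S : Finset (Fin L)) : IsBalanced w (elimSet w strict S) := by
  induction S using Finset.strongInduction with
  | H S ih =>
    rcases elimSet_cases w strict S with ⟨hS, hbal⟩ | ⟨m, hm, -, -, hS⟩
    · rwa [hS]
    · rw [hS]
      exact ih _ (erase_ssubset hm)

theorem elimSet_nonempty {S : Finset (Fin L)} (hw : ∀ ℓ ∈ S, 0 < w ℓ) (hS : S.Nonempty) :
    (elimSet w strict S).Nonempty := by
  induction S using Finset.strongInduction with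
  | H S ih =>
    rcases elimSet_cases w strict S with ⟨hS', -⟩ | ⟨m, hm, -, hsum, hS'⟩
    · rwa [hS']
    · rw [hS']
      exact ih _ (erase_ssubset hm) (fun ℓ hℓ => hw ℓ (mem_of_mem_erase hℓ))
        (erase_nonempty_of_sum_le hw hm hsum)

theorem sum_elimSet_le_of_notMem {S : Finset (Fin L)} (hw : ∀ ℓ ∈ S, 0 < w ℓ)
    (hS : S.Nonempty) {ℓ : Fin L} (hℓS : ℓ ∈ S) (hℓ : ℓ ∉ elimSet w strict S) :
    ∑ ℓ' ∈ elimSet w strict S, w ℓ' ≤ ((#(elimSet w strict S) : ℝ) - 1) * w ℓ := by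
  induction S using Finset.strongInduction generalizing ℓ with
  | H S ih =>
    rcases elimSet_cases w strict S with ⟨hS', -⟩ | ⟨m, hm, hmax, hsum, hS'⟩
    · rw [hS'] at hℓ
      exact absurd hℓS hℓ
    rw [hS'] at hℓ ⊢
    have hw' : ∀ ℓ ∈ S.erase m, 0 < w ℓ := fun ℓ hℓ => hw ℓ (mem_of_mem_erase hℓ)
    have hne := erase_nonempty_of_sum_le hw hm hsum
    by_cases hℓm : ℓ ≠ m
    · exact ih _ (erase_ssubset hm) hw' hne (mem_erase.2 ⟨hℓm, hℓS⟩) hℓ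
    rw [not_not.1 hℓm]
    set T := elimSet w strict (S.erase m)
    by_cases hT : S.erase m ⊆ T
    · -- nothing was removed after `m`: the elimination condition for `S` is the claim
      have hTeq : T = S.erase m := (elimSet_subset _).antisymm hT
      have hcard : ((#(S.erase m) : ℕ) : ℝ) = #S - 1 := by
        rw [card_erase_of_mem hm, Nat.cast_pred (card_pos.2 hS)]
      rw [hTeq, hcard]
      linarith [sum_erase_add S w hm]
    · -- otherwise compare with a later removed index, whose weight is at most `w m`
      obtain ⟨ℓ', hℓ'S, hℓ'T⟩ := not_subset.1 hT
      have hle := ih _ (erase_ssubset hm) hw' hne hℓ'S hℓ'T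
      have hcard : (1 : ℝ) ≤ #T := by exact_mod_cast (elimSet_nonempty hw' hne).card_pos
      nlinarith [hmax ℓ' (mem_of_mem_erase hℓ'S)]

end Elimination

section WaterFilling

variable {ι : Type*} [Fintype ι] {w : ι → ℝ}

variable (w) in
def waterFill (t : ℝ) : ℝ :=
  ∑ ℓ, max 0 (1 - t * w ℓ)

theorem waterFill_antitone (hw : ∀ ℓ, 0 ≤ w ℓ) : Antitone (waterFill w) :=
  fun _ _ hab => sum_le_sum fun ℓ _ => max_le_max le_rfl (by nlinarith [hw ℓ])

theorem waterFill_lt_of_lt (hw : ∀ ℓ, 0 < w ℓ) {a b : ℝ} (hab : a < b)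
    (ha : 0 < waterFill w a) : waterFill w b < waterFill w a := by
  obtain ⟨ℓ₀, -, hℓ₀⟩ := exists_lt_of_sum_lt
    (by simpa [waterFill] using ha : ∑ _ℓ : ι, (0 : ℝ) < ∑ ℓ, max 0 (1 - a * w ℓ))
  have hpos : 0 < 1 - a * w ℓ₀ := by simpa using hℓ₀
  refine sum_lt_sum (fun ℓ _ => max_le_max le_rfl (by nlinarith [hw ℓ])) ⟨ℓ₀, mem_univ _, ?_⟩
  rw [max_eq_right hpos.le]
  exact max_lt hpos (by nlinarith [hw ℓ₀])

theorem waterFill_lt_one (hw : ∀ ℓ, 0 < w ℓ) {r t : ℝ} (hr : waterFill w r = 1) (ht : r < t) :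
    waterFill w t < 1 := by
  rw [← hr]
  exact waterFill_lt_of_lt hw ht (by rw [hr]; exact one_pos)

theorem one_lt_waterFill (hw : ∀ ℓ, 0 < w ℓ) {r t : ℝ} (hr : waterFill w r = 1) (ht : t < r) :
    1 < waterFill w t := by
  have hle : waterFill w r ≤ waterFill w t := waterFill_antitone (fun ℓ => (hw ℓ).le) ht.le
  rw [← hr]
  exact waterFill_lt_of_lt hw ht (by linarith)

theorem eq_of_waterFill_eq_one (hw : ∀ ℓ, 0 < w ℓ) {a b : ℝ} (ha : waterFill w a = 1)
    (hb : waterFill w b = 1) : a = b := by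
  by_contra hab
  rcases lt_or_gt_of_ne hab with h | h
  · exact (waterFill_lt_one hw ha h).ne hb
  · exact (waterFill_lt_one hw hb h).ne ha

end WaterFilling

section Allocation

variable {L : ℕ} {w : Fin L → ℝ} {strict : Bool}

variable (w) in
noncomputable def waterLevel (T : Finset (Fin L)) : ℝ :=
  ((#T : ℝ) - 1) / ∑ ℓ ∈ T, w ℓ

theorem sum_alloc {T : Finset (Fin L)} (hT : ∑ ℓ ∈ T, w ℓ ≠ 0) : ∑ ℓ, alloc w T ℓ = 1 := by
  simp only [alloc]
  rw [sum_ite_mem, univ_inter, ← sum_div, sum_sub_distrib, sum_const, nsmul_eq_mul, ← mul_sum]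
  field_simp
  ring

theorem alloc_eq_max {T : Finset (Fin L)} (hbal : IsBalanced w T) (hT : 0 < ∑ ℓ ∈ T, w ℓ)
    (hout : ∀ ℓ ∉ T, ∑ ℓ' ∈ T, w ℓ' ≤ ((#T : ℝ) - 1) * w ℓ) :
    alloc w T = fun ℓ => max 0 (1 - waterLevel w T * w ℓ) := by
  funext ℓ
  rw [alloc, waterLevel, div_mul_eq_mul_div]
  split_ifs with hℓ
  · rw [max_eq_right (sub_nonneg.2 ((div_le_one hT).2 (hbal ℓ hℓ))), one_sub_div hT.ne']
  · rw [max_eq_left (sub_nonpos.2 ((one_le_div hT).2 (hout ℓ hℓ)))]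

variable [Nonempty (Fin L)]

theorem alloc_elimSet_univ (hw : ∀ ℓ, 0 < w ℓ) :
    alloc w (elimSet w strict univ) =
      fun ℓ => max 0 (1 - waterLevel w (elimSet w strict univ) * w ℓ) := by
  have hw' : ∀ ℓ ∈ univ, 0 < w ℓ := fun ℓ _ => hw ℓ
  exact alloc_eq_max (isBalanced_elimSet _)
    (sum_pos (fun ℓ _ => hw ℓ) (elimSet_nonempty hw' univ_nonempty))
    (fun ℓ hℓ => sum_elimSet_le_of_notMem hw' univ_nonempty (mem_univ ℓ) hℓ)

theorem waterFill_waterLevel_elimSet_univ (hw : ∀ ℓ, 0 < w ℓ) :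
    waterFill w (waterLevel w (elimSet w strict univ)) = 1 := by
  have hT : 0 < ∑ ℓ ∈ elimSet w strict univ, w ℓ :=
    sum_pos (fun ℓ _ => hw ℓ) (elimSet_nonempty (fun ℓ _ => hw ℓ) univ_nonempty)
  rw [waterFill, ← alloc_elimSet_univ hw]
  exact sum_alloc hT.ne'

end Allocation

theorem continuousAt_of_antitone_of_apply_eq {X : Type*} [TopologicalSpace X] {g : X → ℝ → ℝ}
    {r : X → ℝ} {x₀ : X} {c : ℝ} (hg : ∀ t, ContinuousAt (g · t) x₀)
    (hanti : ∀ᶠ x in 𝓝 x₀, Antitone (g x)) (hr : ∀ᶠ x in 𝓝 x₀, g x (r x) = c)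
    (hlt : ∀ t < r x₀, c < g x₀ t) (hgt : ∀ t > r x₀, g x₀ t < c) : ContinuousAt r x₀ := by
  refine tendsto_order.2 ⟨fun t ht => ?_, fun t ht => ?_⟩
  · filter_upwards [(hg t).eventually_const_lt (hlt t ht), hanti, hr] with x hx hxa hxr
    by_contra! h
    linarith [hxa h]
  · filter_upwards [(hg t).eventually_lt_const (hgt t ht), hanti, hr] with x hx hxa hxr
    by_contra! h
    linarith [hxa h]

theorem isOpen_setOf_forall_mem_Ioo {ι : Type*} [Finite ι] (a b : ℝ) :
    IsOpen {x : ι → ℝ | ∀ i, x i ∈ Set.Ioo a b} := by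
  simpa [Set.pi] using isOpen_set_pi Set.finite_univ fun (_ : ι) _ => isOpen_Ioo (a := a) (b := b)

section BitFlip

variable {L : ℕ}

noncomputable def bitFlipWeight (μ : Fin L → ℝ) (ℓ : Fin L) : ℝ :=
  √(μ ℓ * (1 - μ ℓ))

theorem bitFlipWeight_pos {μ : Fin L → ℝ} (hμ : ∀ ℓ, μ ℓ ∈ Set.Ioo (0 : ℝ) 1) (ℓ : Fin L) :
    0 < bitFlipWeight μ ℓ :=
  Real.sqrt_pos.2 (mul_pos (hμ ℓ).1 (sub_pos.2 (hμ ℓ).2))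

theorem continuous_waterFill_bitFlipWeight (t : ℝ) :
    Continuous fun μ : Fin L → ℝ => waterFill (bitFlipWeight μ) t := by
  unfold waterFill bitFlipWeight
  fun_prop

noncomputable def phiLevel (strict : Bool) (μ : Fin L → ℝ) : ℝ :=
  waterLevel (bitFlipWeight μ) (elimSet (bitFlipWeight μ) strict univ)

variable [Nonempty (Fin L)] {strict : Bool} {μ : Fin L → ℝ}

theorem phiStar_eq_max (hμ : ∀ ℓ, μ ℓ ∈ Set.Ioo (0 : ℝ) 1) :
    phiStar strict μ = fun ℓ => max 0 (1 - phiLevel strict μ * bitFlipWeight μ ℓ) :=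
  alloc_elimSet_univ (bitFlipWeight_pos hμ)

theorem waterFill_phiLevel (hμ : ∀ ℓ, μ ℓ ∈ Set.Ioo (0 : ℝ) 1) :
    waterFill (bitFlipWeight μ) (phiLevel strict μ) = 1 :=
  waterFill_waterLevel_elimSet_univ (bitFlipWeight_pos hμ)

theorem phiLevel_true_eq_false (hμ : ∀ ℓ, μ ℓ ∈ Set.Ioo (0 : ℝ) 1) :
    phiLevel true μ = phiLevel false μ :=
  eq_of_waterFill_eq_one (bitFlipWeight_pos hμ) (waterFill_phiLevel hμ) (waterFill_phiLevel hμ)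

theorem continuousAt_phiLevel (hμ : ∀ ℓ, μ ℓ ∈ Set.Ioo (0 : ℝ) 1) :
    ContinuousAt (phiLevel strict) μ :=
  continuousAt_of_antitone_of_apply_eq (g := fun μ => waterFill (bitFlipWeight μ))
    (fun t => (continuous_waterFill_bitFlipWeight t).continuousAt)
    (.of_forall fun _ => waterFill_antitone fun _ => Real.sqrt_nonneg _)
    (eventually_of_mem ((isOpen_setOf_forall_mem_Ioo 0 1).mem_nhds hμ) fun _ => waterFill_phiLevel)
    (fun _ => one_lt_waterFill (bitFlipWeight_pos hμ) (waterFill_phiLevel hμ))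
    (fun _ => waterFill_lt_one (bitFlipWeight_pos hμ) (waterFill_phiLevel hμ))

end BitFlip

theorem stmt13_general (L : ℕ) :
    (∀ μ : Fin L → ℝ, (∀ ℓ, μ ℓ ∈ Set.Ioo (0:ℝ) 1) → phiStar true μ = phiStar false μ) ∧
    ContinuousOn (phiStar (L := L) true) {μ | ∀ ℓ, μ ℓ ∈ Set.Ioo (0:ℝ) 1} := by
  rcases isEmpty_or_nonempty (Fin L) with _ | _
  · exact ⟨fun _ _ => Subsingleton.elim _ _,
      (continuous_of_const fun _ _ => Subsingleton.elim _ _).continuousOn⟩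
  refine ⟨fun μ hμ => by rw [phiStar_eq_max hμ, phiStar_eq_max hμ, phiLevel_true_eq_false hμ], ?_⟩
  have hlevel : ContinuousOn (phiLevel (L := L) true) {μ | ∀ ℓ, μ ℓ ∈ Set.Ioo (0:ℝ) 1} :=
    continuousOn_of_forall_continuousAt fun _ => continuousAt_phiLevel
  refine ContinuousOn.congr ?_ fun _ => phiStar_eq_max
  unfold bitFlipWeight
  fun_prop

/-- the strict and non-strict versions of the elimination condition yield the
same allocation on (0,1)^L, and the resulting piecewise map is continuous there. -/
theorem stmt13 (L : ℕ) (hL : 2 ≤ L) :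
    (∀ μ : Fin L → ℝ, (∀ ℓ, μ ℓ ∈ Set.Ioo (0:ℝ) 1) → phiStar true μ = phiStar false μ) ∧
    ContinuousOn (phiStar (L := L) true) {μ | ∀ ℓ, μ ℓ ∈ Set.Ioo (0:ℝ) 1} :=
  stmt13_general L
end
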